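/- Let (Λ, Λ^∞) be an approximate group, let G be a group, and let ρ : G → Λ^∞ be a surjective symmetric quasimorphism. Then Ξ := ρ⁻¹(D(ρ)⁻¹·Λ·D(ρ)) is an approximate subgroup of G. -/

import Mathlib

open Pointwise

/-- A subset `Λ` of a group `G` is an approximate subgroup if it is symmetric, contains the
identity and `Λ·Λ ⊆ Λ·F` for some finite set `F ⊆ G`. -/
def IsApproximateSubgroup' {G : Type*} [Group G] (Λ : Set G) : Prop :=
  Λ⁻¹ = Λ ∧ (1 : G) ∈ Λ ∧ ∃ F : Set G, F.Finite ∧ Λ * Λ ⊆ Λ * F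

/-- `Λ^∞ = ⋃_{k ≥ 1} Λ^k`. -/
def infPowers {G : Type*} [Group G] (Λ : Set G) : Set G :=
  ⋃ n : ℕ, Λ ^ (n + 1)

/-- The left-defect set of a map between groups. -/
def defectSet {G H : Type*} [Group G] [Group H] (f : G → H) : Set H :=
  {d : H | ∃ x y : G, d = (f y)⁻¹ * (f x)⁻¹ * f (x * y)}

/-- A map between groups is a quasimorphism if its left-defect set is finite. -/
def IsQuasimorphism {G H : Type*} [Group G] [Group H] (f : G → H) : Prop :=
  (defectSet f).Finite

/-!
Write `D = D(ρ)` and `Ξ' = D⁻¹ Λ D`. Since `ρ(xy) = ρ(x) ρ(y) d` with `d ∈ D`, we get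
`ρ(Ξ Ξ) ⊆ Ξ' Ξ' D`. The finite set `D ∪ D⁻¹` lies in some power `Λⁿ`, so `Ξ' Ξ' D ⊆ Λ^N ⊆ Λ F`
for a finite `F`, because `Λ` is an approximate subgroup. Finally, choosing preimages `g(c)` of
the `c ∈ F`, any `x` with `ρ(x) ∈ Λ c` factors as `x = (x g(c)⁻¹) g(c)` with
`ρ(x g(c)⁻¹) ∈ Λ D ⊆ Ξ'`, so `Ξ Ξ ⊆ Ξ g(F)`.
-/

section Defect

variable {G H : Type*} [Group G] [Group H] {f : G → H}

lemma one_mem_defectSet (hone : f 1 = 1) : (1 : H) ∈ defectSet f :=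
  ⟨1, 1, by simp [hone]⟩

lemma map_mul_mem_mul_defectSet (f : G → H) (x y : G) :
    f (x * y) ∈ {f x * f y} * defectSet f :=
  Set.mem_mul.2 ⟨f x * f y, rfl, _, ⟨x, y, rfl⟩, by group⟩

lemma preimage_mul_preimage_subset (f : G → H) (S T : Set H) :
    f ⁻¹' S * f ⁻¹' T ⊆ f ⁻¹' (S * T * defectSet f) := by
  rintro _ ⟨x, hx, y, hy, rfl⟩
  obtain ⟨_, rfl, d, hd, hxy⟩ := map_mul_mem_mul_defectSet f x y
  rw [Set.mem_preimage, ← hxy]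
  exact Set.mul_mem_mul (Set.mul_mem_mul hx hy) hd

lemma inv_preimage_of_map_inv (hsym : ∀ x, f x⁻¹ = (f x)⁻¹) (S : Set H) :
    (f ⁻¹' S)⁻¹ = f ⁻¹' S⁻¹ := by
  ext x
  simp [hsym]

lemma exists_finite_preimage_mul_subset (hsurj : Function.Surjective f)
    (hsym : ∀ x, f x⁻¹ = (f x)⁻¹) (A : Set H) {F : Set H} (hF : F.Finite) :
    ∃ F' : Set G, F'.Finite ∧ f ⁻¹' (A * F) ⊆ f ⁻¹' (A * defectSet f) * F' := by
  choose g hg using hsurj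
  refine ⟨g '' F, hF.image g, ?_⟩
  rintro x ⟨a, ha, c, hc, hx⟩
  have hfactor : x = x * (g c)⁻¹ * g c := by group
  refine hfactor ▸ Set.mul_mem_mul ?_ (Set.mem_image_of_mem g hc)
  obtain ⟨_, rfl, d, hd, hxc⟩ := map_mul_mem_mul_defectSet f x (g c)⁻¹
  have hfxc : f (x * (g c)⁻¹) = a * d := by
    rw [← hxc, hsym, hg, ← hx]
    group
  exact Set.mem_preimage.2 (hfxc ▸ Set.mul_mem_mul ha hd)

end Defect

section Powers

variable {H : Type*} [Group H] {Λ F₀ : Set H}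

lemma exists_finite_pow_succ_subset_mul (h : Λ * Λ ⊆ Λ * F₀) (hF₀ : F₀.Finite) (n : ℕ) :
    ∃ F : Set H, F.Finite ∧ Λ ^ (n + 1) ⊆ Λ * F := by
  induction n with
  | zero => exact ⟨1, Set.finite_one, by simp⟩
  | succ n ih =>
    obtain ⟨F, hF, hcover⟩ := ih
    refine ⟨F₀ * F, hF₀.mul hF, ?_⟩
    calc Λ ^ (n + 2) = Λ * Λ ^ (n + 1) := pow_succ' Λ (n + 1)
      _ ⊆ Λ * (Λ * F) := Set.mul_subset_mul_left hcover
      _ = Λ * Λ * F := (mul_assoc _ _ _).symm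
      _ ⊆ Λ * F₀ * F := Set.mul_subset_mul_right h
      _ = Λ * (F₀ * F) := mul_assoc _ _ _

lemma IsApproximateSubgroup'.exists_finite_pow_subset_mul (hΛ : IsApproximateSubgroup' Λ)
    (n : ℕ) : ∃ F : Set H, F.Finite ∧ Λ ^ n ⊆ Λ * F := by
  obtain ⟨-, h1, F₀, hF₀, hcover⟩ := hΛ
  obtain ⟨F, hF, hsucc⟩ := exists_finite_pow_succ_subset_mul hcover hF₀ n
  exact ⟨F, hF, (Set.pow_subset_pow_right h1 n.le_succ).trans hsucc⟩

lemma exists_subset_pow_of_finite (h1 : (1 : H) ∈ Λ) {S : Set H} (hS : S.Finite)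
    (hSΛ : S ⊆ infPowers Λ) : ∃ n, S ⊆ Λ ^ n := by
  have hdir : Directed (· ⊆ ·) fun n : ℕ => Λ ^ (n + 1) :=
    Monotone.directed_le fun _ _ hmn => Set.pow_subset_pow_right h1 (Nat.succ_le_succ hmn)
  obtain ⟨n, hn⟩ := hdir.exists_mem_subset_of_finset_subset_biUnion (s := hS.toFinset)
    (by simpa [infPowers] using hSΛ)
  exact ⟨n + 1, by simpa using hn⟩

end Powers

/-- `hgen` realizes the enveloping group `Λ^∞` as the whole group `H`, so `ρ : G → H` plays the
role of `ρ : G → Λ^∞`. -/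
theorem preimage_under_symmetric_quasimorphism {G H : Type*} [Group G] [Group H]
    (Λ : Set H) (hΛ : IsApproximateSubgroup' Λ) (hgen : infPowers Λ = Set.univ)
    (ρ : G → H) (hρ : IsQuasimorphism ρ) (hsurj : Function.Surjective ρ)
    (hone : ρ 1 = 1) (hsym : ∀ x : G, ρ x⁻¹ = (ρ x)⁻¹) :
    IsApproximateSubgroup' (ρ ⁻¹' ((defectSet ρ)⁻¹ * Λ * defectSet ρ)) := by
  set D := defectSet ρ
  obtain ⟨hinv, h1Λ, -⟩ := id hΛ
  have h1D : (1 : H) ∈ D := one_mem_defectSet hone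
  have h1Dinv : (1 : H) ∈ D⁻¹ := by simpa using h1D
  refine ⟨?_, ?_, ?_⟩
  · rw [inv_preimage_of_map_inv hsym, mul_inv_rev, mul_inv_rev, inv_inv, hinv, mul_assoc]
  · simpa [hone] using Set.mul_mem_mul (Set.mul_mem_mul h1Dinv h1Λ) h1D
  obtain ⟨n, hn⟩ := exists_subset_pow_of_finite h1Λ (hρ.union hρ.inv) (hgen ▸ Set.subset_univ _)
  have hD : D ⊆ Λ ^ n := Set.subset_union_left.trans hn
  have hDinv : D⁻¹ ⊆ Λ ^ n := Set.subset_union_right.trans hn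
  have hΞ' : D⁻¹ * Λ * D ⊆ Λ ^ (n + 1 + n) := by
    rw [pow_add, pow_add, pow_one]
    exact Set.mul_subset_mul (Set.mul_subset_mul_right hDinv) hD
  obtain ⟨F, hF, hcover⟩ := hΛ.exists_finite_pow_subset_mul ((n + 1 + n) + (n + 1 + n) + n)
  obtain ⟨F', hF', hlift⟩ := exists_finite_preimage_mul_subset hsurj hsym Λ hF
  refine ⟨F', hF', (preimage_mul_preimage_subset ρ _ _).trans ?_⟩
  calc ρ ⁻¹' (D⁻¹ * Λ * D * (D⁻¹ * Λ * D) * D)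
      ⊆ ρ ⁻¹' (Λ * F) := Set.preimage_mono <| hcover.trans' <| by
        rw [pow_add, pow_add]
        exact Set.mul_subset_mul (Set.mul_subset_mul hΞ' hΞ') hD
    _ ⊆ ρ ⁻¹' (Λ * D) * F' := hlift
    _ ⊆ ρ ⁻¹' (D⁻¹ * Λ * D) * F' :=
        Set.mul_subset_mul_right <| Set.preimage_mono <| Set.mul_subset_mul_right <|
          Set.subset_mul_right Λ h1Dinv
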